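/- Let s = ψ_X(x₁⋯xₙ⋯) be an X-AR word, with xᵢ ∈ X, over an alphabet A with d = card(A) letters. There exists an integer ν such that for all h ≥ ν, the number S_r(h) of right special factors of s of length h satisfies S_r(h) ≥ λ_X = (card(X) − 1)/(d − 1); moreover, at least λ_X of the right special factors of each length h ≥ ν have order d. -/
import Mathlib


open List

/-- Right palindromic closure: `w⁺ = u Q u~` where `Q` is the longest palindromic
suffix of `w = uQ`; equivalently the shortest palindrome having `w` as a prefix. -/
noncomputable def palClosure {A : Type*} (w : List A) : List A :=
  letI : DecidablePred fun k => (w.drop k).reverse = w.drop k :=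
    fun _ => Classical.propDecidable _
  w ++ (w.take (Nat.find (⟨w.length, by simp⟩ :
    ∃ k, (w.drop k).reverse = w.drop k))).reverse

/-- The palindromization map `ψ_X` relative to a code `X`, evaluated on the
(unique) `X`-factorization `l = [x₁, …, xₙ]` of a word of `X*`. -/
noncomputable def psiList {A : Type*} (l : List (List A)) : List A :=
  l.foldl (fun p x => palClosure (p ++ x)) []

/-- The (usual) palindromization map `ψ` on words, letter by letter. -/
noncomputable def psiWord {A : Type*} (w : List A) : List A :=
  w.foldl (fun p a => palClosure (p ++ [a])) []

/-- `X` is a code: nonempty words with unique factorization over `X`. -/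
def IsCode {A : Type*} (X : Set (List A)) : Prop :=
  (∀ x ∈ X, x ≠ []) ∧
  ∀ l l' : List (List A), (∀ w ∈ l, w ∈ X) → (∀ w ∈ l', w ∈ X) →
    l.flatten = l'.flatten → l = l'

/-- `X` is a prefix code: nonempty words, none a proper prefix of another. -/
def IsPrefixCode {A : Type*} (X : Set (List A)) : Prop :=
  (∀ x ∈ X, x ≠ []) ∧ ∀ x ∈ X, ∀ y ∈ X, x <+: y → x = y

/-- `X` is a maximal prefix code over `A`. -/
def IsMaximalPrefixCode {A : Type*} (X : Set (List A)) : Prop :=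
  IsPrefixCode X ∧ ∀ Y : Set (List A), IsPrefixCode Y → X ⊆ Y → X = Y

/-- `w ∈ X*`. -/
def InStar {A : Type*} (X : Set (List A)) (w : List A) : Prop :=
  ∃ l : List (List A), (∀ u ∈ l, u ∈ X) ∧ l.flatten = w

/-- The finite word `w` is a prefix of the infinite word `s`. -/
def PrefixOfInf {A : Type*} (w : List A) (s : ℕ → A) : Prop :=
  ∀ i : ℕ, ∀ h : i < w.length, w.get ⟨i, h⟩ = s i

/-- The finite word `w` is a factor of the infinite word `s`. -/
def FactorOfInf {A : Type*} (w : List A) (s : ℕ → A) : Prop :=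
  ∃ i : ℕ, w = List.ofFn fun k : Fin w.length => s (i + k.1)

/-- `X` has finite deciphering delay. -/
def FiniteDecipheringDelay {A : Type*} (X : Set (List A)) : Prop :=
  ∃ k : ℕ, ∀ x ∈ X, ∀ x' ∈ X,
    (∃ (l l' : List (List A)) (r : List A),
      (∀ w ∈ l, w ∈ X) ∧ l.length = k ∧ (∀ w ∈ l', w ∈ X) ∧
      x ++ l.flatten ++ r = x' ++ l'.flatten) → x = x'

/-- The sequence `y = y₁y₂⋯ ∈ X^ω` is alternating. -/
def Alternating {A : Type*} (y : ℕ → List A) : Prop :=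
  ∃ a b : A, a ≠ b ∧ ∃ (lam : List A) (idx : ℕ → ℕ), StrictMono idx ∧
    ∀ k : ℕ, (lam ++ [a]) <+: y (idx (2 * k)) ∧ (lam ++ [b]) <+: y (idx (2 * k + 1))

/-- The infinite word `s` is ultimately periodic. -/
def UltimatelyPeriodic {A : Type*} (s : ℕ → A) : Prop :=
  ∃ p : ℕ, 0 < p ∧ ∃ N : ℕ, ∀ n ≥ N, s (n + p) = s n

/-- The infinite word `s` is uniformly recurrent: every factor occurs in every
sufficiently long factor of `s`. -/
def UniformlyRecurrent {A : Type*} (s : ℕ → A) : Prop :=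
  ∀ w : List A, FactorOfInf w s →
    ∃ N : ℕ, ∀ i : ℕ, w <:+: List.ofFn fun k : Fin N => s (i + k.1)

/-- Factor complexity of the infinite word `s`. -/
noncomputable def complexity {A : Type*} (s : ℕ → A) (n : ℕ) : ℕ :=
  {u : List A | u.length = n ∧ FactorOfInf u s}.ncard

/-- A word `w` is primitive if it is not a proper power. -/
def Primitive {A : Type*} (w : List A) : Prop :=
  ∀ (v : List A) (n : ℕ), 1 < n → w ≠ (List.replicate n v).flatten


section helpers
variable {A : Type*}

theorem palClosure_prefix (w : List A) : w <+: palClosure w := ⟨_, rfl⟩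

theorem palClosure_palindrome (w : List A) :
    (palClosure w).reverse = palClosure w := by
  unfold palClosure
  letI : DecidablePred fun k => (w.drop k).reverse = w.drop k :=
    fun _ => Classical.propDecidable _
  set k := Nat.find (⟨w.length, by simp⟩ : ∃ k, (w.drop k).reverse = w.drop k) with hkdef
  have hk : (w.drop k).reverse = w.drop k :=
    Nat.find_spec (⟨w.length, by simp⟩ : ∃ k, (w.drop k).reverse = w.drop k)
  have hw : w.reverse = w.drop k ++ (w.take k).reverse := by
    conv_lhs => rw [← List.take_append_drop k w]
    rw [List.reverse_append, hk]
  rw [List.reverse_append, List.reverse_reverse, hw, ← List.append_assoc,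
    List.take_append_drop]
end helpers

section helpers2
variable {A : Type*}

theorem factorOfInf_iff (u : List A) (s : ℕ → A) :
    FactorOfInf u s ↔ ∃ i : ℕ, ∀ k, ∀ _ : k < u.length, u[k] = s (i + k) := by
  constructor
  · rintro ⟨i, hi⟩
    refine ⟨i, fun k hk => ?_⟩
    rw [List.getElem_of_eq hi]
    simp
  · rintro ⟨i, hi⟩
    refine ⟨i, ?_⟩
    apply List.ext_getElem (by simp)
    intro k h1 h2
    simp [hi k h1]

theorem FactorOfInf.of_infix {u w : List A} {s : ℕ → A}
    (h : u <:+: w) (hw : FactorOfInf w s) : FactorOfInf u s := by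
  obtain ⟨a, b, rfl⟩ := h
  rw [factorOfInf_iff] at hw ⊢
  obtain ⟨i, hi⟩ := hw
  refine ⟨i + a.length, fun k hk => ?_⟩
  have hlen : a.length + k < (a ++ u ++ b).length := by
    simp; omega
  have h1 : a.length + k < (a ++ u).length := by simp; omega
  have := hi (a.length + k) hlen
  rw [List.getElem_append_left h1, List.getElem_append_right (by omega)] at this
  simpa [Nat.add_assoc] using this

theorem PrefixOfInf.factorOfInf {w : List A} {s : ℕ → A}
    (h : PrefixOfInf w s) : FactorOfInf w s := by
  rw [factorOfInf_iff]
  exact ⟨0, fun k hk => by simpa using h k hk⟩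

theorem PrefixOfInf.take_eq {w : List A} {s : ℕ → A}
    (h : PrefixOfInf w s) (m : ℕ) (hm : m ≤ w.length) :
    w.take m = List.ofFn (fun k : Fin m => s k.1) := by
  apply List.ext_getElem (by simp [hm])
  intro k h1 h2
  simp only [List.length_take, Nat.lt_min] at h1
  simpa using h k h1.2

end helpers2

section psi
variable {A : Type*}

/-- `Ψ n`, the `n`-th palindromic prefix. -/
noncomputable def Psi (y : ℕ → List A) (n : ℕ) : List A :=
  psiList (List.ofFn fun i : Fin n => y i.1)

theorem Psi_zero (y : ℕ → List A) : Psi y 0 = [] := rfl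

theorem Psi_succ (y : ℕ → List A) (n : ℕ) :
    Psi y (n + 1) = palClosure (Psi y n ++ y n) := by
  unfold Psi psiList
  rw [List.ofFn_succ']
  simp [List.foldl_concat]

theorem Psi_palindrome (y : ℕ → List A) (n : ℕ) :
    (Psi y n).reverse = Psi y n := by
  induction n with
  | zero => rfl
  | succ n ih => rw [Psi_succ]; exact palClosure_palindrome _

theorem Psi_prefix_succ (y : ℕ → List A) (n : ℕ) :
    Psi y n ++ y n <+: Psi y (n + 1) := by
  rw [Psi_succ]; exact palClosure_prefix _

theorem Psi_prefix_mono (y : ℕ → List A) {n m : ℕ} (h : n ≤ m) :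
    Psi y n <+: Psi y m := by
  induction m with
  | zero => simp_all
  | succ m ih =>
    rcases Nat.lt_or_ge n (m+1) with h' | h'
    · exact ((ih (by omega)).trans ((List.prefix_append _ _).trans
        (Psi_prefix_succ y m)))
    · have : n = m + 1 := by omega
      subst this; exact List.prefix_rfl

theorem Psi_suffix_mono (y : ℕ → List A) {n m : ℕ} (h : n ≤ m) :
    Psi y n <:+ Psi y m := by
  have := (Psi_prefix_mono y h).reverse
  rwa [Psi_palindrome, Psi_palindrome] at this

theorem Psi_length (y : ℕ → List A) (hy : ∀ i, y i ≠ []) (n : ℕ) :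
    n ≤ (Psi y n).length := by
  induction n with
  | zero => simp
  | succ n ih =>
    have h1 := (Psi_prefix_succ y n).length_le
    have h2 : 1 ≤ (y n).length := List.length_pos_iff.mpr (hy n)
    simp only [List.length_append] at h1
    omega

end psi

section maxcode
variable {A : Type*}

theorem mpc_complete {X : Set (List A)} (hX : IsMaximalPrefixCode X)
    {p : List A} (hp : ∃ x ∈ X, p <+: x ∧ p ≠ x) (c : A) :
    ∃ x ∈ X, p ++ [c] <+: x := by
  by_contra hno
  push_neg at hno
  obtain ⟨x₀, hx₀, hpx₀, hpne⟩ := hp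
  have hplt : p.length < x₀.length :=
    lt_of_le_of_ne hpx₀.length_le (fun hl => hpne (hpx₀.eq_of_length hl))
  have hpc : p ++ [c] ∉ X := fun h => hno _ h List.prefix_rfl
  have hY : IsPrefixCode (X ∪ {p ++ [c]}) := by
    constructor
    · rintro x hx
      rcases hx with hx | hx
      · exact hX.1.1 x hx
      · simp only [Set.mem_singleton_iff] at hx; subst hx; simp
    · intro x hx z hz hpre
      rcases hx with hx | hx
      · rcases hz with hz | hz
        · exact hX.1.2 x hx z hz hpre
        · simp only [Set.mem_singleton_iff] at hz; subst hz
          rcases Nat.lt_or_ge x.length (p ++ [c]).length with hlen | hlen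
          · have hxp : x <+: p := by
              apply List.prefix_of_prefix_length_le hpre (List.prefix_append p [c])
              simp at hlen ⊢; omega
            have hxx₀ : x = x₀ := hX.1.2 x hx x₀ hx₀ (hxp.trans hpx₀)
            have := hxp.length_le
            rw [hxx₀] at this
            omega
          · have hx' : x = p ++ [c] :=
              hpre.eq_of_length (le_antisymm hpre.length_le hlen)
            exact absurd (hx' ▸ hx) hpc
      · simp only [Set.mem_singleton_iff] at hx; subst hx
        rcases hz with hz | hz
        · exact absurd hpre (fun h => hno z hz h)
        · simp only [Set.mem_singleton_iff] at hz; exact hz.symm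
  have hXY := hX.2 _ hY Set.subset_union_left
  exact hpc (hXY ▸ Set.mem_union_right _ rfl)

theorem psi_block_factor {X : Set (List A)} (y : ℕ → List A) (s : ℕ → A)
    (hpers : ∀ x ∈ X, ∀ N : ℕ, ∃ i ≥ N, y i = x)
    (hs : ∀ n, PrefixOfInf (Psi y n) s)
    (n : ℕ) {x : List A} (hx : x ∈ X) : FactorOfInf (Psi y n ++ x) s := by
  obtain ⟨m, hm, hym⟩ := hpers x hx n
  have h1 : Psi y m ++ x <+: Psi y (m + 1) := hym ▸ Psi_prefix_succ y m
  have h2 : Psi y n <:+ Psi y m := Psi_suffix_mono y hm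
  obtain ⟨t, ht⟩ := h2
  obtain ⟨r, hr⟩ := h1
  have hinf : Psi y n ++ x <:+: Psi y (m + 1) :=
    ⟨t, r, by rw [← hr, ← ht]; simp [List.append_assoc]⟩
  exact FactorOfInf.of_infix hinf (hs (m + 1)).factorOfInf

end maxcode

section key
variable {A : Type*}

/-- The central lemma: for every proper prefix `p` of a word of `X` and every
letter `c`, the word `(pref_{h-|p|}(s))~ p c` is a factor of `s`. -/
theorem key_factor {X : Set (List A)} (hX : IsMaximalPrefixCode X)
    (y : ℕ → List A) (s : ℕ → A) (hy : ∀ i, y i ∈ X)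
    (hpers : ∀ x ∈ X, ∀ N : ℕ, ∃ i ≥ N, y i = x)
    (hs : ∀ n, PrefixOfInf (Psi y n) s)
    {p : List A} (hp : ∃ x ∈ X, p <+: x ∧ p ≠ x) (c : A)
    {h : ℕ} (hph : p.length ≤ h) :
    FactorOfInf ((List.ofFn fun k : Fin (h - p.length) => s k.1).reverse
      ++ p ++ [c]) s := by
  obtain ⟨x, hxX, hpcx⟩ := mpc_complete hX hp c
  have hynil : ∀ i, y i ≠ [] := fun i => hX.1.1 _ (hy i)
  have hlen : h ≤ (Psi y h).length := Psi_length y hynil h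
  have htake : (Psi y h).take (h - p.length) =
      List.ofFn fun k : Fin (h - p.length) => s k.1 :=
    (hs h).take_eq _ (by omega)
  -- the reversed prefix is a suffix of `Psi y h`
  have hsuf : (List.ofFn fun k : Fin (h - p.length) => s k.1).reverse
      <:+ Psi y h := by
    rw [← htake]
    have := (List.take_prefix (h - p.length) (Psi y h)).reverse
    rwa [Psi_palindrome] at this
  obtain ⟨t, ht⟩ := hsuf
  obtain ⟨r, hr⟩ := hpcx
  have hinf : (List.ofFn fun k : Fin (h - p.length) => s k.1).reverse
      ++ p ++ [c] <:+: Psi y h ++ x :=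
    ⟨t, r, by rw [← hr, ← ht]; simp [List.append_assoc]⟩
  exact FactorOfInf.of_infix hinf (psi_block_factor y s hpers hs h hxX)

/-- `s` is not purely periodic. -/
theorem s_not_periodic [Fintype A] (hd : 1 < Fintype.card A)
    {X : Set (List A)} (hX : IsMaximalPrefixCode X)
    (y : ℕ → List A) (s : ℕ → A) (hy : ∀ i, y i ∈ X)
    (hpers : ∀ x ∈ X, ∀ N : ℕ, ∃ i ≥ N, y i = x)
    (hs : ∀ n, PrefixOfInf (Psi y n) s)
    {δ : ℕ} (hδ : 0 < δ) : ∃ j : ℕ, s (j + δ) ≠ s j := by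
  by_contra hper
  push_neg at hper
  obtain ⟨a, b, hab⟩ := Fintype.exists_pair_of_one_lt_card hd
  have hpnil : ∃ x ∈ X, ([] : List A) <+: x ∧ ([] : List A) ≠ x :=
    ⟨y 0, hy 0, List.nil_prefix, fun h => hX.1.1 _ (hy 0) h.symm⟩
  -- both `u a` and `u b` are factors, where u = (pref δ)~ ++ [c]
  have key : ∀ c : A, c = s (δ - 1) := by
    intro c
    have hf := key_factor hX y s hy hpers hs hpnil c (Nat.zero_le δ)
    rw [List.append_nil] at hf
    rw [factorOfInf_iff] at hf
    obtain ⟨i, hi⟩ := hf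
    have hlen : ∀ k, k < δ →
        k < ((List.ofFn fun k : Fin (δ - 0) => s k.1).reverse ++ [c]).length := by
      intro k hk; simp; omega
    have hckey : c = s (i + δ) := by
      have hd1 : δ < ((List.ofFn fun k : Fin (δ - 0) => s k.1).reverse
          ++ [c]).length := by simp
      have := hi δ hd1
      rw [List.getElem_append_right (by simp)] at this
      simpa using this
    have h0 : s (δ - 1) = s i := by
      have h00 := hi 0 (hlen 0 hδ)
      rw [List.getElem_append_left (by simp; omega)] at h00
      rw [List.getElem_reverse] at h00
      simpa using h00
    have hip : s (i + δ) = s i := hper i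
    rw [hckey, hip, ← h0]
  have := (key a).trans (key b).symm
  exact hab this

end key

section count
variable {A : Type*}

theorem properPrefixes_finite {X : Set (List A)} (hfin : X.Finite) :
    {p : List A | ∃ x ∈ X, p <+: x ∧ p ≠ x}.Finite := by
  apply Set.Finite.subset (Set.Finite.biUnion hfin
    (fun x _ => ((Set.finite_Iic x.length).image (fun k => x.take k))))
  rintro p ⟨x, hx, hpx, -⟩
  exact Set.mem_biUnion hx ⟨p.length, by simp [hpx.length_le],
    (List.prefix_iff_eq_take.mp hpx).symm⟩

theorem tree_count [Fintype A] (hd : 1 < Fintype.card A)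
    {X : Set (List A)} (hfin : X.Finite) (hX : IsPrefixCode X)
    (hne : X.Nonempty) :
    X.ncard - 1 ≤
      {p : List A | ∃ x ∈ X, p <+: x ∧ p ≠ x}.ncard * (Fintype.card A - 1) := by
  classical
  set P := {p : List A | ∃ x ∈ X, p <+: x ∧ p ≠ x} with hPdef
  have hPfin : P.Finite := properPrefixes_finite hfin
  set Pf := hPfin.toFinset with hPf
  set Xf := hfin.toFinset with hXf
  have hdisj : Disjoint Pf Xf := by
    rw [Finset.disjoint_left]
    intro v hv hv'
    rw [hPf, Set.Finite.mem_toFinset] at hv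
    rw [hXf, Set.Finite.mem_toFinset] at hv'
    obtain ⟨x, hx, hvx, hvne⟩ := hv
    exact hvne (hX.2 v hv' x hx hvx)
  have hnilP : ([] : List A) ∈ Pf := by
    rw [hPf, Set.Finite.mem_toFinset]
    obtain ⟨x, hx⟩ := hne
    exact ⟨x, hx, List.nil_prefix, fun h => hX.1 x hx h.symm⟩
  set Sf := (Pf ∪ Xf).erase ([] : List A) with hSf
  -- the parent map
  have hinj : ∀ v ∈ Sf, ∀ w ∈ Sf,
      (v.dropLast, v.getLast?) = (w.dropLast, w.getLast?) → v = w := by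
    intro v hv w hw heq
    have hvne : v ≠ [] := (Finset.mem_erase.mp hv).1
    have hwne : w ≠ [] := (Finset.mem_erase.mp hw).1
    rw [Prod.mk.injEq] at heq
    rw [← List.dropLast_append_getLast hvne, ← List.dropLast_append_getLast hwne,
      heq.1]
    congr 1
    have h1 := List.getLast?_eq_getLast_of_ne_nil hvne
    have h2 := List.getLast?_eq_getLast_of_ne_nil hwne
    rw [h1, h2] at heq
    simpa using heq.2
  have hmaps : ∀ v ∈ Sf, (v.dropLast, v.getLast?) ∈
      Pf ×ˢ (Finset.univ.image (Option.some : A → Option A)) := by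
    intro v hv
    obtain ⟨hvne, hvu⟩ := Finset.mem_erase.mp hv
    have hvx : ∃ x ∈ X, v <+: x := by
      rcases Finset.mem_union.mp hvu with h | h
      · rw [hPf, Set.Finite.mem_toFinset] at h
        obtain ⟨x, hx, hvx, -⟩ := h
        exact ⟨x, hx, hvx⟩
      · rw [hXf, Set.Finite.mem_toFinset] at h
        exact ⟨v, h, List.prefix_rfl⟩
    obtain ⟨x, hx, hvx⟩ := hvx
    rw [Finset.mem_product]
    dsimp only
    constructor
    · rw [hPf, Set.Finite.mem_toFinset]
      refine ⟨x, hx, (List.dropLast_prefix v).trans hvx, fun h => ?_⟩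
      have h1 : v.dropLast.length < v.length := by
        have := List.length_pos_iff.mpr hvne
        simp [List.length_dropLast]; omega
      have h2 := hvx.length_le
      rw [h] at h1
      omega
    · simp only [Finset.mem_image, Finset.mem_univ, true_and]
      exact ⟨v.getLast hvne, (List.getLast?_eq_getLast_of_ne_nil hvne).symm⟩
  have hcard : Sf.card ≤ Pf.card * Fintype.card A := by
    have := Finset.card_le_card_of_injOn _ hmaps hinj
    rwa [Finset.card_product, Finset.card_image_of_injective _
      (Option.some_injective A), Finset.card_univ] at this
  have hScard : Sf.card = Pf.card + Xf.card - 1 := by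
    rw [hSf, Finset.card_erase_of_mem (Finset.mem_union_left _ hnilP),
      Finset.card_union_of_disjoint hdisj]
  have hXcard : X.ncard = Xf.card := Set.ncard_eq_toFinset_card X hfin
  have hPcard : P.ncard = Pf.card := Set.ncard_eq_toFinset_card P hPfin
  rw [hXcard, hPcard]
  have hmul : Pf.card * Fintype.card A =
      Pf.card * (Fintype.card A - 1) + Pf.card := by
    conv_lhs => rw [show Fintype.card A = (Fintype.card A - 1) + 1 by omega]
    ring
  omega

end count

section mainaux
variable {A : Type*}

theorem cand_inj_aux (s : ℕ → A) {h : ℕ} {p p' : List A}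
    (hlt : p.length < p'.length) (hp'h : p'.length ≤ h)
    (heq : (List.ofFn fun k : Fin (h - p.length) => s k.1).reverse ++ p =
      (List.ofFn fun k : Fin (h - p'.length) => s k.1).reverse ++ p') :
    ∀ j < h - p'.length, s (j + (p'.length - p.length)) = s j := by
  intro j hj
  set i := h - p'.length - 1 - j with hidef
  have hi : i < h - p'.length := by omega
  have h1 : i < ((List.ofFn fun k : Fin (h - p.length) => s k.1).reverse
      ++ p).length := by simp; omega
  have e := List.getElem_of_eq heq h1
  rw [List.getElem_append_left (by simp; omega),
    List.getElem_append_left (by simp; omega),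
    List.getElem_reverse, List.getElem_reverse] at e
  simp only [List.getElem_ofFn, List.length_ofFn] at e
  have e1 : h - p.length - 1 - i = j + (p'.length - p.length) := by omega
  have e2 : h - p'.length - 1 - i = j := by omega
  rw [e1, e2] at e
  exact e

end mainaux

/-- For an `X`-AR word `s` there is `ν` such that for all
`h ≥ ν` the number of right special factors of `s` of length `h` is at least
`λ_X = (card X − 1)/(d − 1)`, and at least `λ_X` of them have order `d`. -/
theorem stmt10 {A : Type*} [Fintype A] (hd : 1 < Fintype.card A)
    (X : Set (List A)) (hfin : X.Finite) (hX : IsMaximalPrefixCode X)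
    (y : ℕ → List A) (hy : ∀ i, y i ∈ X)
    (hpers : ∀ x ∈ X, ∀ N : ℕ, ∃ i ≥ N, y i = x)
    (s : ℕ → A)
    (hs : ∀ n : ℕ, PrefixOfInf (psiList (List.ofFn fun i : Fin n => y i.1)) s) :
    ∃ ν : ℕ, ∀ h ≥ ν,
      (X.ncard - 1) / (Fintype.card A - 1) ≤
        {u : List A | u.length = h ∧ FactorOfInf u s ∧
          2 ≤ {c : A | FactorOfInf (u ++ [c]) s}.ncard}.ncard ∧
      (X.ncard - 1) / (Fintype.card A - 1) ≤
        {u : List A | u.length = h ∧ FactorOfInf u s ∧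
          {c : A | FactorOfInf (u ++ [c]) s}.ncard = Fintype.card A}.ncard := by
  classical
  have hs' : ∀ n, PrefixOfInf (Psi y n) s := hs
  have hA : Nonempty A := Fintype.card_pos_iff.mp (by omega)
  set P := {p : List A | ∃ x ∈ X, p <+: x ∧ p ≠ x} with hPdef
  have hPfin : P.Finite := properPrefixes_finite hfin
  set L := hfin.toFinset.sup List.length with hLdef
  have hxL : ∀ x ∈ X, x.length ≤ L :=
    fun x hx => Finset.le_sup ((Set.Finite.mem_toFinset _).mpr hx)
  have hpL : ∀ p ∈ P, p.length < L := by
    rintro p ⟨x, hx, hpx, hpne⟩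
    exact lt_of_lt_of_le
      (lt_of_le_of_ne hpx.length_le (fun hl => hpne (hpx.eq_of_length hl)))
      (hxL x hx)
  have hnp : ∀ δ, 0 < δ → ∃ j, s (j + δ) ≠ s j :=
    fun δ hδ => s_not_periodic hd hX y s hy hpers hs' hδ
  set f : ℕ → ℕ := fun δ => if hδ : 0 < δ then (hnp δ hδ).choose else 0 with hfdef
  set J := (Finset.range (L + 1)).sup f with hJdef
  refine ⟨J + L + 1, fun h hh => ?_⟩
  set cand : List A → List A :=
    fun p => (List.ofFn fun k : Fin (h - p.length) => s k.1).reverse ++ p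
    with hcand
  have hclen : ∀ p ∈ P, (cand p).length = h := by
    intro p hp
    have := hpL p hp
    rw [hcand]
    simp
    omega
  have hcfac : ∀ p ∈ P, ∀ c : A, FactorOfInf (cand p ++ [c]) s := by
    intro p hp c
    have hple : p.length ≤ h := le_of_lt (lt_of_lt_of_le (hpL p hp) (by omega))
    exact key_factor hX y s hy hpers hs' hp c hple
  have huniv : ∀ p ∈ P, {c : A | FactorOfInf (cand p ++ [c]) s} = Set.univ :=
    fun p hp => Set.eq_univ_of_forall (fun c => hcfac p hp c)
  have hcfac' : ∀ p ∈ P, FactorOfInf (cand p) s := by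
    intro p hp
    obtain ⟨c⟩ := hA
    exact FactorOfInf.of_infix ⟨[], [c], by simp⟩ (hcfac p hp c)
  have haux : ∀ p ∈ P, ∀ p' ∈ P, p.length < p'.length → cand p ≠ cand p' := by
    intro p hp p' hp' hlt heq
    set δ := p'.length - p.length with hδdef
    have hδpos : 0 < δ := by omega
    have hp'L := hpL p' hp'
    have hper := cand_inj_aux s hlt (by omega) heq
    have hjspec : s (f δ + δ) ≠ s (f δ) := by
      rw [hfdef]
      dsimp only
      rw [dif_pos hδpos]
      exact (hnp δ hδpos).choose_spec
    have hjJ : f δ ≤ J := Finset.le_sup (Finset.mem_range.mpr (by omega))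
    exact hjspec (hper (f δ) (by omega))
  have hinj : Set.InjOn cand P := by
    intro p hp p' hp' heq
    rcases lt_trichotomy p.length p'.length with hl | hl | hl
    · exact absurd heq (haux p hp p' hp' hl)
    · have hlen1 : ((List.ofFn fun k : Fin (h - p.length) => s k.1).reverse).length
          = ((List.ofFn fun k : Fin (h - p'.length) => s k.1).reverse).length := by
        simp [hl]
      rw [hcand] at heq
      exact (List.append_inj heq hlen1).2
    · exact absurd heq.symm (haux p' hp' p hp hl)
  have hTfin : {l : List A | l.length = h}.Finite := List.finite_length_eq A h
  have hchain : (X.ncard - 1) / (Fintype.card A - 1) ≤ P.ncard := by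
    have h1 := tree_count hd hfin hX.1 ⟨y 0, hy 0⟩
    calc (X.ncard - 1) / (Fintype.card A - 1)
        ≤ (P.ncard * (Fintype.card A - 1)) / (Fintype.card A - 1) :=
          Nat.div_le_div_right h1
      _ = P.ncard := Nat.mul_div_cancel _ (by omega)
  have himcard : P.ncard = (cand '' P).ncard :=
    (Set.ncard_image_of_injOn hinj).symm
  constructor
  · refine le_trans (hchain.trans_eq himcard) (Set.ncard_le_ncard ?_
      (hTfin.subset (fun v hv => hv.1)))
    rintro _ ⟨p, hp, rfl⟩
    refine ⟨hclen p hp, hcfac' p hp, ?_⟩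
    rw [huniv p hp, Set.ncard_univ, Nat.card_eq_fintype_card]
    omega
  · refine le_trans (hchain.trans_eq himcard) (Set.ncard_le_ncard ?_
      (hTfin.subset (fun v hv => hv.1)))
    rintro _ ⟨p, hp, rfl⟩
    refine ⟨hclen p hp, hcfac' p hp, ?_⟩
    rw [huniv p hp, Set.ncard_univ, Nat.card_eq_fintype_card]
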